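/- Suppose the observation map G and its surrogates G_N satisfy sup_{d∈D} ∫ ‖G(x;d)‖⁴_Γ dμ₀(x) ≤ C_G and sup_{d∈D} ∫ ‖G_N(x;d)‖⁴_Γ dμ₀(x) ≤ C_G for all N. Then for Gaussian noise N(0,Γ), the quantity K = ∫_{ℝ^p}∫_X log²(π(y|x;d)/π(y;d)) [π(y|x;d) + π_N(y|x;d)] dμ₀(x) dy is bounded by a constant depending only on p and C_G, uniformly in d and N. -/

import Mathlib

open MeasureTheory Matrix

/-- Density of the multivariate normal distribution `N(m, Γ)` on `ℝ^p`. -/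
noncomputable def gaussDensity (p : ℕ) (Γ : Matrix (Fin p) (Fin p) ℝ)
    (m : Fin p → ℝ) (y : Fin p → ℝ) : ℝ :=
  (Real.sqrt ((2 * Real.pi) ^ p * Γ.det))⁻¹ *
    Real.exp (-(1 / 2) * ((y - m) ⬝ᵥ Γ⁻¹.mulVec (y - m)))

/-!
Write `Q v = vᵀ Γ⁻¹ v` and `π(y) = ∫ π(y|x') dμ₀(x')`. Every Gaussian density is at most its
peak value `π(0|0)`, hence so is `π(y)`, while Jensen's inequality for `exp` gives
`π(y) ≥ π(0|0) exp(-½ ∫ Q(y - G x') dμ₀)`. So `log (π(y|x) / π(y))` lies between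
`-½ Q(y - G x)` and `½ ∫ Q(y - G x') dμ₀`, and `Q(u - v) ≤ 2 Q u + 2 Q v` bounds its square,
around any centre `m`, by `6 Q(y - m)² + 24 (Q(m)² + Q(G x)² + (∫ Q ∘ G)²)`. With `m = G x` and
`m = G_N x` the integrand is dominated by Gaussian weights whose `y`-integrals are moments of one
centred Gaussian (finite since `t² e^{-t/2} ≤ 32 e^{-t/4}`), so after Fubini only the fourth
moments of `G` and `G_N` remain, both at most `C_G`.
-/

section Fubini

variable {X Y : Type*} [MeasurableSpace X] [MeasurableSpace Y] {μ : Measure X} {ν : Measure Y}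
  [SFinite μ] [SFinite ν]

theorem integral_integral_le_integral_prod {F : X → Y → ℝ} {g : X × Y → ℝ}
    (hF : ∀ x y, 0 ≤ F x y) (hFg : ∀ x y, F x y ≤ g (x, y)) (hg : Integrable g (μ.prod ν)) :
    ∫ y, ∫ x, F x y ∂μ ∂ν ≤ ∫ z, g z ∂(μ.prod ν) := by
  rw [integral_prod_symm g hg]
  refine integral_mono_of_nonneg (.of_forall fun y => integral_nonneg (hF · y))
    hg.integral_prod_right ?_
  filter_upwards [hg.prod_left_ae] with y hy
  exact integral_mono_of_nonneg (.of_forall (hF · y)) hy (.of_forall (hFg · y))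

end Fubini

section Translation

variable {X G : Type*} [MeasurableSpace X] [MeasurableSpace G] [AddGroup G] [MeasurableAdd₂ G]
  [MeasurableNeg G] {μ : Measure X} {ν : Measure G} [SFinite ν] [ν.IsAddRightInvariant]
  {b : X → ℝ} {m : X → G} {f : G → ℝ}

theorem integrable_prod_mul_comp_sub (hb : Integrable b μ) (hm : Measurable m)
    (hf : Integrable f ν) (hfm : Measurable f) :
    Integrable (fun z : X × G => b z.1 * f (z.2 - m z.1)) (μ.prod ν) := by
  refine (integrable_prod_iff ?_).2
    ⟨.of_forall fun x => (hf.comp_sub_right (m x)).const_mul (b x), ?_⟩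
  · exact hb.1.comp_fst.mul
      (hfm.comp (measurable_snd.sub (hm.comp measurable_fst))).aestronglyMeasurable
  · simp_rw [norm_mul, integral_const_mul, integral_sub_right_eq_self (‖f ·‖)]
    exact hb.norm.mul_const _

theorem integral_prod_mul_comp_sub [SFinite μ] (hb : Integrable b μ) (hm : Measurable m)
    (hf : Integrable f ν) (hfm : Measurable f) :
    ∫ z, b z.1 * f (z.2 - m z.1) ∂(μ.prod ν) = (∫ x, b x ∂μ) * ∫ v, f v ∂ν := by
  rw [integral_prod _ (integrable_prod_mul_comp_sub hb hm hf hfm)]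
  simp_rw [integral_const_mul, integral_sub_right_eq_self f]
  exact integral_mul_const _ _

end Translation

namespace MeasureTheory

theorem Integrable.comp_linearMap {E F : Type*} [NormedAddCommGroup E] [NormedSpace ℝ E]
    [MeasurableSpace E] [BorelSpace E] [FiniteDimensional ℝ E] [NormedAddCommGroup F]
    {μ : Measure E} [μ.IsAddHaarMeasure] {g : E → F} (hg : Integrable g μ) {f : E →ₗ[ℝ] E}
    (hf : LinearMap.det f ≠ 0) : Integrable (g ∘ f) μ := by
  have hmap : Integrable g (Measure.map f μ) := by
    rw [Measure.map_linearMap_addHaar_eq_smul_addHaar μ hf]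
    exact hg.smul_measure ENNReal.ofReal_ne_top
  exact (integrable_map_measure hmap.1
    (LinearMap.continuous_of_finiteDimensional f).measurable.aemeasurable).1 hmap

theorem Integrable.of_sq {X : Type*} [MeasurableSpace X] {μ : Measure X} [IsFiniteMeasure μ]
    {f : X → ℝ} (hf : AEStronglyMeasurable f μ) (hf2 : Integrable (fun x => f x ^ 2) μ) :
    Integrable f μ :=
  ((memLp_two_iff_integrable_sq hf).2 hf2).integrable one_le_two

theorem sq_integral_le_integral_sq {X : Type*} [MeasurableSpace X] {μ : Measure X}
    [IsProbabilityMeasure μ] {f : X → ℝ} (hf : Integrable f μ)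
    (hf2 : Integrable (fun x => f x ^ 2) μ) :
    (∫ x, f x ∂μ) ^ 2 ≤ ∫ x, f x ^ 2 ∂μ :=
  even_two.convexOn_pow.map_integral_le (continuous_pow 2).continuousOn isClosed_univ
    (.of_forall fun _ => Set.mem_univ _) hf hf2

end MeasureTheory

theorem sq_mul_exp_neg_half_le {t : ℝ} (ht : 0 ≤ t) :
    t ^ 2 * Real.exp (-(1 / 2) * t) ≤ 32 * Real.exp (-(1 / 4) * t) := by
  have h := Real.pow_div_factorial_le_exp (t / 4) (by positivity) 2
  have hsplit : Real.exp (-(1 / 4) * t) = Real.exp (t / 4) * Real.exp (-(1 / 2) * t) := by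
    rw [← Real.exp_add]; ring_nf
  rw [hsplit]
  norm_num [Nat.factorial] at h
  nlinarith [Real.exp_pos (-(1 / 2) * t)]

theorem sq_le_add_sq_of_neg_le_of_le {a b t : ℝ} (ha : 0 ≤ a) (hb : 0 ≤ b) (h₁ : -a ≤ t)
    (h₂ : t ≤ b) : t ^ 2 ≤ a ^ 2 + b ^ 2 := by
  rcases le_total 0 t with ht | ht <;> nlinarith

namespace Matrix

variable {n : Type*} [Fintype n] {M : Matrix n n ℝ}

theorem PosSemidef.dotProduct_mulVec_self_nonneg (hM : M.PosSemidef) (v : n → ℝ) :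
    0 ≤ v ⬝ᵥ M *ᵥ v := by
  simpa using hM.dotProduct_mulVec_nonneg v

theorem PosSemidef.dotProduct_mulVec_sub_le (hM : M.PosSemidef) (u v : n → ℝ) :
    (u - v) ⬝ᵥ M *ᵥ (u - v) ≤ 2 * (u ⬝ᵥ M *ᵥ u) + 2 * (v ⬝ᵥ M *ᵥ v) := by
  have h := hM.dotProduct_mulVec_self_nonneg (u + v)
  simp only [mulVec_add, mulVec_sub, dotProduct_add, dotProduct_sub, add_dotProduct,
    sub_dotProduct] at h ⊢
  linarith

theorem PosSemidef.dotProduct_mulVec_sub_le_of_center (hM : M.PosSemidef) (y a m : n → ℝ) :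
    (y - a) ⬝ᵥ M *ᵥ (y - a)
      ≤ 2 * ((y - m) ⬝ᵥ M *ᵥ (y - m)) + 4 * (m ⬝ᵥ M *ᵥ m) + 4 * (a ⬝ᵥ M *ᵥ a) := by
  have h₁ := hM.dotProduct_mulVec_sub_le (y - m) (a - m)
  have h₂ := hM.dotProduct_mulVec_sub_le a m
  rw [sub_sub_sub_cancel_right] at h₁
  linarith

theorem PosDef.integrable_exp_neg_mul_dotProduct_mulVec (hM : M.PosDef) {c : ℝ} (hc : 0 < c) :
    Integrable fun v : n → ℝ => Real.exp (-c * (v ⬝ᵥ M *ᵥ v)) := by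
  classical
  -- `M = Bᴴ B` with `B` invertible, so `vᵀ M v = ∑ i, (B v) i ²` and the change of variables
  -- `v ↦ B v` reduces the claim to a product of one-dimensional Gaussians.
  open scoped MatrixOrder in
  obtain ⟨B, hB, rfl⟩ := CStarAlgebra.isStrictlyPositive_iff_eq_star_mul_self.mp
    hM.isStrictlyPositive
  have hprod : Integrable fun z : n → ℝ => ∏ i, Real.exp (-c * z i ^ 2) :=
    Integrable.fintype_prod (f := fun _ t => Real.exp (-c * t ^ 2))
      fun _ => integrable_exp_neg_mul_sq hc
  have hdet : LinearMap.det (toLin' B) ≠ 0 := by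
    rw [LinearMap.det_toLin']; exact (isUnit_iff_isUnit_det B).1 hB |>.ne_zero
  refine (hprod.comp_linearMap hdet).congr (.of_forall fun v => ?_)
  simp only [Function.comp_apply, toLin'_apply, ← Real.exp_sum, ← Finset.mul_sum]
  congr 2
  rw [← mulVec_mulVec, dotProduct_mulVec, star_eq_conjTranspose, vecMul_conjTranspose,
    star_trivial, star_trivial, dotProduct]
  exact Finset.sum_congr rfl fun i _ => by ring

end Matrix

section GaussDensity

variable {p : ℕ} {Γ : Matrix (Fin p) (Fin p) ℝ}

theorem gaussDensity_eq_mul_exp (m y : Fin p → ℝ) :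
    gaussDensity p Γ m y
      = gaussDensity p Γ 0 0 * Real.exp (-(1 / 2) * ((y - m) ⬝ᵥ Γ⁻¹ *ᵥ (y - m))) := by
  simp [gaussDensity]

theorem gaussDensity_eq_sub (m y : Fin p → ℝ) :
    gaussDensity p Γ m y = gaussDensity p Γ 0 (y - m) := by
  simp [gaussDensity]

@[fun_prop]
theorem Continuous.gaussDensity {α : Type*} [TopologicalSpace α] {m y : α → Fin p → ℝ}
    (hm : Continuous m) (hy : Continuous y) :
    Continuous fun a => _root_.gaussDensity p Γ (m a) (y a) := by
  unfold _root_.gaussDensity; fun_prop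

theorem gaussDensity_pos (hΓ : Γ.PosDef) (m y : Fin p → ℝ) : 0 < gaussDensity p Γ m y := by
  have := hΓ.det_pos
  unfold gaussDensity; positivity

theorem gaussDensity_le (hΓ : Γ.PosDef) (m y : Fin p → ℝ) :
    gaussDensity p Γ m y ≤ gaussDensity p Γ 0 0 := by
  rw [gaussDensity_eq_mul_exp]
  refine mul_le_of_le_one_right (gaussDensity_pos hΓ 0 0).le (Real.exp_le_one_iff.2 ?_)
  nlinarith [hΓ.inv.posSemidef.dotProduct_mulVec_self_nonneg (y - m)]

theorem integrable_gaussDensity (hΓ : Γ.PosDef) : Integrable (gaussDensity p Γ 0) := by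
  refine ((hΓ.inv.integrable_exp_neg_mul_dotProduct_mulVec one_half_pos).const_mul
    (gaussDensity p Γ 0 0)).congr (.of_forall fun y => ?_)
  simp [gaussDensity_eq_mul_exp (Γ := Γ) 0 y]

theorem integrable_sq_mul_gaussDensity (hΓ : Γ.PosDef) :
    Integrable fun v => (v ⬝ᵥ Γ⁻¹ *ᵥ v) ^ 2 * gaussDensity p Γ 0 v := by
  refine ((hΓ.inv.integrable_exp_neg_mul_dotProduct_mulVec (c := 1 / 4) (by norm_num)).const_mul
    (32 * gaussDensity p Γ 0 0)).mono' (by fun_prop) (.of_forall fun v => ?_)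
  have hq := hΓ.inv.posSemidef.dotProduct_mulVec_self_nonneg v
  rw [Real.norm_of_nonneg (mul_nonneg (sq_nonneg _) (gaussDensity_pos hΓ 0 v).le),
    gaussDensity_eq_mul_exp, sub_zero]
  have := mul_le_mul_of_nonneg_left (sq_mul_exp_neg_half_le hq) (gaussDensity_pos hΓ 0 0).le
  linarith

end GaussDensity

section GaussMixture

variable {p : ℕ} {Γ : Matrix (Fin p) (Fin p) ℝ} {X : Type*} [MeasurableSpace X]
  {μ₀ : Measure X} [IsProbabilityMeasure μ₀] {A : X → Fin p → ℝ}

theorem integrable_gaussDensity_comp (hΓ : Γ.PosDef) (hA : Measurable A) (y : Fin p → ℝ) :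
    Integrable (fun x => gaussDensity p Γ (A x) y) μ₀ :=
  .of_bound (by fun_prop) _ (.of_forall fun x => by
    rw [Real.norm_of_nonneg (gaussDensity_pos hΓ _ _).le]; exact gaussDensity_le hΓ _ _)

theorem integral_gaussDensity_comp_le (hΓ : Γ.PosDef) (hA : Measurable A) (y : Fin p → ℝ) :
    ∫ x, gaussDensity p Γ (A x) y ∂μ₀ ≤ gaussDensity p Γ 0 0 := by
  simpa using integral_mono (integrable_gaussDensity_comp (μ₀ := μ₀) hΓ hA y)
    (integrable_const _) fun x => gaussDensity_le hΓ (A x) y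

theorem mul_exp_le_integral_gaussDensity_comp (hΓ : Γ.PosDef) (y : Fin p → ℝ)
    (hint : Integrable (fun x => (y - A x) ⬝ᵥ Γ⁻¹ *ᵥ (y - A x)) μ₀) :
    gaussDensity p Γ 0 0 * Real.exp (-(1 / 2) * ∫ x, (y - A x) ⬝ᵥ Γ⁻¹ *ᵥ (y - A x) ∂μ₀)
      ≤ ∫ x, gaussDensity p Γ (A x) y ∂μ₀ := by
  have hexp : Integrable (fun x => Real.exp (-(1 / 2) * ((y - A x) ⬝ᵥ Γ⁻¹ *ᵥ (y - A x)))) μ₀ :=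
    .of_bound (Real.continuous_exp.comp_aestronglyMeasurable (hint.1.const_mul _)) 1
      (.of_forall fun x => by
        rw [Real.norm_of_nonneg (Real.exp_pos _).le, Real.exp_le_one_iff]
        nlinarith [hΓ.inv.posSemidef.dotProduct_mulVec_self_nonneg (y - A x)])
  have hjensen := convexOn_exp.map_integral_le Real.continuous_exp.continuousOn isClosed_univ
    (.of_forall fun _ => Set.mem_univ _) (hint.const_mul (-(1 / 2))) hexp
  simp only [integral_const_mul] at hjensen
  simp_rw [gaussDensity_eq_mul_exp _ y, integral_const_mul]
  exact mul_le_mul_of_nonneg_left hjensen (gaussDensity_pos hΓ 0 0).le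

theorem sq_log_gaussDensity_div_integral_le (hΓ : Γ.PosDef) (hA : Measurable A) (x : X)
    (y : Fin p → ℝ) (hint : Integrable (fun x' => (y - A x') ⬝ᵥ Γ⁻¹ *ᵥ (y - A x')) μ₀) :
    Real.log (gaussDensity p Γ (A x) y / ∫ x', gaussDensity p Γ (A x') y ∂μ₀) ^ 2
      ≤ ((y - A x) ⬝ᵥ Γ⁻¹ *ᵥ (y - A x)) ^ 2 / 4
        + (∫ x', (y - A x') ⬝ᵥ Γ⁻¹ *ᵥ (y - A x') ∂μ₀) ^ 2 / 4 := by
  set q := (y - A x) ⬝ᵥ Γ⁻¹ *ᵥ (y - A x)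
  set M := ∫ x', (y - A x') ⬝ᵥ Γ⁻¹ *ᵥ (y - A x') ∂μ₀
  set π := ∫ x', gaussDensity p Γ (A x') y ∂μ₀
  have hq : 0 ≤ q := hΓ.inv.posSemidef.dotProduct_mulVec_self_nonneg _
  have hM : 0 ≤ M := integral_nonneg fun x' => hΓ.inv.posSemidef.dotProduct_mulVec_self_nonneg _
  have hπ_le : π ≤ gaussDensity p Γ 0 0 := integral_gaussDensity_comp_le hΓ hA y
  have hπ_ge := mul_exp_le_integral_gaussDensity_comp hΓ y hint
  have hπ : 0 < π := lt_of_lt_of_le (by have := gaussDensity_pos hΓ 0 0; positivity) hπ_ge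
  have hratio : 0 < gaussDensity p Γ (A x) y / π := div_pos (gaussDensity_pos hΓ _ _) hπ
  have hL_ge : -(1 / 2) * q ≤ Real.log (gaussDensity p Γ (A x) y / π) := by
    rw [Real.le_log_iff_exp_le hratio, le_div_iff₀ hπ, gaussDensity_eq_mul_exp, mul_comm]
    exact mul_le_mul_of_nonneg_right hπ_le (Real.exp_pos _).le
  have hL_le : Real.log (gaussDensity p Γ (A x) y / π) ≤ (1 / 2) * M := by
    rw [Real.log_le_iff_le_exp hratio, div_le_iff₀ hπ]
    calc gaussDensity p Γ (A x) y ≤ gaussDensity p Γ 0 0 := gaussDensity_le hΓ _ _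
      _ = Real.exp ((1 / 2) * M) * (gaussDensity p Γ 0 0 * Real.exp (-(1 / 2) * M)) := by
        rw [mul_left_comm, ← Real.exp_add]; ring_nf; simp
      _ ≤ Real.exp ((1 / 2) * M) * π := mul_le_mul_of_nonneg_left hπ_ge (Real.exp_pos _).le
  have := sq_le_add_sq_of_neg_le_of_le (a := (1 / 2) * q) (by positivity) (by positivity)
    (by linarith) hL_le
  linarith

theorem sq_log_gaussDensity_div_integral_le_of_center (hΓ : Γ.PosDef) (hA : Measurable A)
    (hA1 : Integrable (fun x => A x ⬝ᵥ Γ⁻¹ *ᵥ A x) μ₀) (x : X) (y m : Fin p → ℝ) :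
    Real.log (gaussDensity p Γ (A x) y / ∫ x', gaussDensity p Γ (A x') y ∂μ₀) ^ 2
      ≤ 6 * ((y - m) ⬝ᵥ Γ⁻¹ *ᵥ (y - m)) ^ 2 + 24 * ((m ⬝ᵥ Γ⁻¹ *ᵥ m) ^ 2
        + (A x ⬝ᵥ Γ⁻¹ *ᵥ A x) ^ 2 + (∫ x', A x' ⬝ᵥ Γ⁻¹ *ᵥ A x' ∂μ₀) ^ 2) := by
  have hΓinv := hΓ.inv.posSemidef
  set s := 2 * ((y - m) ⬝ᵥ Γ⁻¹ *ᵥ (y - m)) + 4 * (m ⬝ᵥ Γ⁻¹ *ᵥ m)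
  have hbound (x' : X) := hΓinv.dotProduct_mulVec_sub_le_of_center y (A x') m
  have hint_bound := (integrable_const s).add (hA1.const_mul 4)
  have hint : Integrable (fun x' => (y - A x') ⬝ᵥ Γ⁻¹ *ᵥ (y - A x')) μ₀ := by
    refine hint_bound.mono' (by fun_prop) (.of_forall fun x' => ?_)
    rw [Real.norm_of_nonneg (hΓinv.dotProduct_mulVec_self_nonneg _)]
    exact hbound x'
  have hM_le : ∫ x', (y - A x') ⬝ᵥ Γ⁻¹ *ᵥ (y - A x') ∂μ₀
      ≤ s + 4 * ∫ x', A x' ⬝ᵥ Γ⁻¹ *ᵥ A x' ∂μ₀ := by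
    refine (integral_mono hint hint_bound hbound).trans_eq ?_
    simp [integral_add (integrable_const s) (hA1.const_mul 4), integral_const_mul]
  have hs : 0 ≤ s := by
    have := hΓinv.dotProduct_mulVec_self_nonneg (y - m)
    have := hΓinv.dotProduct_mulVec_self_nonneg m
    positivity
  have hq := sq_le_sq' (by linarith [hΓinv.dotProduct_mulVec_self_nonneg (y - A x),
    hΓinv.dotProduct_mulVec_self_nonneg (A x)]) (hbound x)
  have hM0 : 0 ≤ ∫ x', (y - A x') ⬝ᵥ Γ⁻¹ *ᵥ (y - A x') ∂μ₀ :=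
    integral_nonneg fun x' => hΓinv.dotProduct_mulVec_self_nonneg _
  have hE0 : 0 ≤ ∫ x', A x' ⬝ᵥ Γ⁻¹ *ᵥ A x' ∂μ₀ :=
    integral_nonneg fun x' => hΓinv.dotProduct_mulVec_self_nonneg _
  have hM := sq_le_sq' (by linarith) hM_le
  have := sq_log_gaussDensity_div_integral_le hΓ hA x y hint
  nlinarith [sq_nonneg (2 * ((y - m) ⬝ᵥ Γ⁻¹ *ᵥ (y - m)) - 4 * (m ⬝ᵥ Γ⁻¹ *ᵥ m)),
    sq_nonneg (s - 4 * (A x ⬝ᵥ Γ⁻¹ *ᵥ A x)), sq_nonneg (s - 4 * ∫ x', A x' ⬝ᵥ Γ⁻¹ *ᵥ A x' ∂μ₀)]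

end GaussMixture

section GaussWeight

variable {p : ℕ} {Γ : Matrix (Fin p) (Fin p) ℝ} {X : Type*}

noncomputable def gaussWeight (p : ℕ) (Γ : Matrix (Fin p) (Fin p) ℝ) (a : ℝ) (b : X → ℝ)
    (m : X → Fin p → ℝ) (z : X × (Fin p → ℝ)) : ℝ :=
  (a * ((z.2 - m z.1) ⬝ᵥ Γ⁻¹ *ᵥ (z.2 - m z.1)) ^ 2 + b z.1) * gaussDensity p Γ (m z.1) z.2

theorem gaussWeight_eq_comp_sub (a : ℝ) (b : X → ℝ) (m : X → Fin p → ℝ) (z : X × (Fin p → ℝ)) :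
    gaussWeight p Γ a b m z
      = a * (fun v => (v ⬝ᵥ Γ⁻¹ *ᵥ v) ^ 2 * gaussDensity p Γ 0 v) (z.2 - m z.1)
        + b z.1 * gaussDensity p Γ 0 (z.2 - m z.1) := by
  rw [gaussWeight, gaussDensity_eq_sub]; ring

variable [MeasurableSpace X] {μ₀ : Measure X} [IsProbabilityMeasure μ₀] {m : X → Fin p → ℝ}
  {b : X → ℝ}

theorem integrable_gaussWeight (hΓ : Γ.PosDef) (hm : Measurable m) (hb : Integrable b μ₀)
    (a : ℝ) : Integrable (gaussWeight p Γ a b m) (μ₀.prod volume) := by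
  simp_rw [funext (gaussWeight_eq_comp_sub a b m)]
  exact (integrable_prod_mul_comp_sub (integrable_const a) hm (integrable_sq_mul_gaussDensity hΓ)
    (by fun_prop)).add
    (integrable_prod_mul_comp_sub hb hm (integrable_gaussDensity hΓ) (by fun_prop))

theorem integral_gaussWeight (hΓ : Γ.PosDef) (hm : Measurable m) (hb : Integrable b μ₀)
    (a : ℝ) :
    ∫ z, gaussWeight p Γ a b m z ∂(μ₀.prod volume)
      = a * (∫ v, (v ⬝ᵥ Γ⁻¹ *ᵥ v) ^ 2 * gaussDensity p Γ 0 v)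
        + (∫ x, b x ∂μ₀) * ∫ v, gaussDensity p Γ 0 v := by
  simp_rw [gaussWeight_eq_comp_sub]
  rw [integral_add
      (integrable_prod_mul_comp_sub (integrable_const a) hm (integrable_sq_mul_gaussDensity hΓ)
        (by fun_prop))
      (integrable_prod_mul_comp_sub hb hm (integrable_gaussDensity hΓ) (by fun_prop)),
    integral_prod_mul_comp_sub (integrable_const a) hm (integrable_sq_mul_gaussDensity hΓ)
      (by fun_prop),
    integral_prod_mul_comp_sub hb hm (integrable_gaussDensity hΓ) (by fun_prop)]
  simp

end GaussWeight

section KBound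

variable {p : ℕ} {Γ : Matrix (Fin p) (Fin p) ℝ} {X : Type*} [MeasurableSpace X]
  {μ₀ : Measure X} [IsProbabilityMeasure μ₀] {A B : X → Fin p → ℝ}

theorem integral_integral_sq_log_mul_gaussDensity_le (hΓ : Γ.PosDef) (hA : Measurable A)
    (hB : Measurable B) (hA2 : Integrable (fun x => (A x ⬝ᵥ Γ⁻¹ *ᵥ A x) ^ 2) μ₀)
    (hB2 : Integrable (fun x => (B x ⬝ᵥ Γ⁻¹ *ᵥ B x) ^ 2) μ₀) :
    ∫ y, ∫ x, Real.log (gaussDensity p Γ (A x) y / ∫ x', gaussDensity p Γ (A x') y ∂μ₀) ^ 2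
        * (gaussDensity p Γ (A x) y + gaussDensity p Γ (B x) y) ∂μ₀
      ≤ 12 * (∫ v, (v ⬝ᵥ Γ⁻¹ *ᵥ v) ^ 2 * gaussDensity p Γ 0 v)
        + 48 * (2 * (∫ x, (A x ⬝ᵥ Γ⁻¹ *ᵥ A x) ^ 2 ∂μ₀) + (∫ x, (B x ⬝ᵥ Γ⁻¹ *ᵥ B x) ^ 2 ∂μ₀)
          + (∫ x, A x ⬝ᵥ Γ⁻¹ *ᵥ A x ∂μ₀) ^ 2) * ∫ v, gaussDensity p Γ 0 v := by
  set E := ∫ x, A x ⬝ᵥ Γ⁻¹ *ᵥ A x ∂μ₀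
  set R : X → ℝ := fun x => 2 * (A x ⬝ᵥ Γ⁻¹ *ᵥ A x) ^ 2 + (B x ⬝ᵥ Γ⁻¹ *ᵥ B x) ^ 2 + E ^ 2
  have hR : Integrable R μ₀ := ((hA2.const_mul 2).add hB2).add (integrable_const _)
  have hR_int : ∫ x, R x ∂μ₀
      = 2 * (∫ x, (A x ⬝ᵥ Γ⁻¹ *ᵥ A x) ^ 2 ∂μ₀) + (∫ x, (B x ⬝ᵥ Γ⁻¹ *ᵥ B x) ^ 2 ∂μ₀) + E ^ 2 := by
    simp only [R]
    rw [integral_add (by exact (hA2.const_mul 2).add hB2) (integrable_const _),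
      integral_add (hA2.const_mul 2) hB2, integral_const_mul]
    simp
  have hwA := integrable_gaussWeight hΓ hA (hR.const_mul 24) 6
  have hwB := integrable_gaussWeight hΓ hB (hR.const_mul 24) 6
  calc _ ≤ _ := integral_integral_le_integral_prod
        (fun x y => mul_nonneg (sq_nonneg _)
          (add_pos (gaussDensity_pos hΓ _ _) (gaussDensity_pos hΓ _ _)).le)
        (fun x y => ?_) (hwA.add hwB)
    _ = _ := by
      rw [integral_add' hwA hwB, integral_gaussWeight hΓ hA (hR.const_mul 24),
        integral_gaussWeight hΓ hB (hR.const_mul 24), integral_const_mul, hR_int]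
      ring
  have hL := sq_log_gaussDensity_div_integral_le_of_center (μ₀ := μ₀) hΓ hA
    (.of_sq (by fun_prop) hA2) x y
  have hRA : (A x ⬝ᵥ Γ⁻¹ *ᵥ A x) ^ 2 + (A x ⬝ᵥ Γ⁻¹ *ᵥ A x) ^ 2 + E ^ 2 ≤ R x := by
    simp only [R]; nlinarith [sq_nonneg (B x ⬝ᵥ Γ⁻¹ *ᵥ B x)]
  have hRB : (B x ⬝ᵥ Γ⁻¹ *ᵥ B x) ^ 2 + (A x ⬝ᵥ Γ⁻¹ *ᵥ A x) ^ 2 + E ^ 2 ≤ R x := by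
    simp only [R]; nlinarith [sq_nonneg (A x ⬝ᵥ Γ⁻¹ *ᵥ A x)]
  rw [Pi.add_apply, mul_add]
  exact add_le_add
    (mul_le_mul_of_nonneg_right ((hL (A x)).trans (by dsimp only; gcongr)) (gaussDensity_pos hΓ _ _).le)
    (mul_le_mul_of_nonneg_right ((hL (B x)).trans (by dsimp only; gcongr)) (gaussDensity_pos hΓ _ _).le)

end KBound

/-- if the observation map `G` and its surrogates `G_N` have `Γ`-weighted fourth
moments bounded by `C_G` uniformly in `d` (and `N`), then for Gaussian likelihoods with noise
covariance `Γ` the quantity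
`K = ∫∫ log²(π(y|x;d)/π(y;d)) [π(y|x;d) + π_N(y|x;d)] dμ₀ dy`
is bounded by a constant, uniformly in `d` and `N`. -/
theorem K_uniformly_bounded {X : Type*} [MeasurableSpace X]
    (μ₀ : Measure X) [IsProbabilityMeasure μ₀]
    (p : ℕ) (Γ : Matrix (Fin p) (Fin p) ℝ) (hΓ : Γ.PosDef)
    {D : Type*} (G : D → X → Fin p → ℝ) (GN : ℕ → D → X → Fin p → ℝ)
    (hGmeas : ∀ d, Measurable (G d)) (hGNmeas : ∀ N d, Measurable (GN N d))
    (CG : ℝ)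
    (hG4int : ∀ d, Integrable (fun x => ((G d x) ⬝ᵥ Γ⁻¹.mulVec (G d x)) ^ 2) μ₀)
    (hGN4int : ∀ N d, Integrable (fun x => ((GN N d x) ⬝ᵥ Γ⁻¹.mulVec (GN N d x)) ^ 2) μ₀)
    (hG4 : ∀ d, ∫ x, ((G d x) ⬝ᵥ Γ⁻¹.mulVec (G d x)) ^ 2 ∂μ₀ ≤ CG)
    (hGN4 : ∀ N d, ∫ x, ((GN N d x) ⬝ᵥ Γ⁻¹.mulVec (GN N d x)) ^ 2 ∂μ₀ ≤ CG) :
    ∃ C : ℝ, ∀ (d : D) (N : ℕ),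
      (∫ y, (∫ x,
          (Real.log (gaussDensity p Γ (G d x) y / ∫ x', gaussDensity p Γ (G d x') y ∂μ₀)) ^ 2
            * (gaussDensity p Γ (G d x) y + gaussDensity p Γ (GN N d x) y) ∂μ₀))
        ≤ C := by
  refine ⟨12 * (∫ v, (v ⬝ᵥ Γ⁻¹ *ᵥ v) ^ 2 * gaussDensity p Γ 0 v)
    + 192 * CG * ∫ v, gaussDensity p Γ 0 v, fun d N => ?_⟩
  have hE : (∫ x, G d x ⬝ᵥ Γ⁻¹ *ᵥ G d x ∂μ₀) ^ 2 ≤ CG :=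
    (sq_integral_le_integral_sq (.of_sq (by fun_prop) (hG4int d)) (hG4int d)).trans (hG4 d)
  have hI : 0 ≤ ∫ v, gaussDensity p Γ 0 v := integral_nonneg fun v => (gaussDensity_pos hΓ 0 v).le
  refine (integral_integral_sq_log_mul_gaussDensity_le hΓ (hGmeas d) (hGNmeas N d) (hG4int d)
    (hGN4int N d)).trans ?_
  have hmoments := add_le_add (add_le_add (mul_le_mul_of_nonneg_left (hG4 d) zero_le_two)
    (hGN4 N d)) hE
  nlinarith [mul_le_mul_of_nonneg_right hmoments hI]
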